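/- With the notation of the context, the quadratic form 𝓔^Y(u,u) := 𝓔^{μ,F}(u,u) + ∫_{ℝ^d} u² dρ⁺, where 𝓔^{μ,F}(u,u) := 𝓔(u,u) − ∬_{ℝ^d×ℝ^d} u(x)u(y)(e^{F(x,y)}−1)n(x,y) dy dx − ∫u²dμ⁺ + ∫u²dμ⁻, satisfies 𝓔^Y(u,u) = 𝓔⁻(u,u) + (1/2)∬_{ℝ^d×ℝ^d} (u(x)−u(y))² G⁺(x,y) n(x,y) dx dy; in particular 𝓔^Y(u,u) ≥ 0 (the form 𝓔^Y is non-negative definite). -/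
import Mathlib


noncomputable section

open MeasureTheory Real ENNReal Set
open scoped Classical

/-- The state space `ℝ^d` with the Euclidean norm and Lebesgue measure. -/
abbrev V (d : ℕ) := EuclideanSpace ℝ (Fin d)

/-- `I(r) = ∫₀^∞ s^{(d+α)/2-1} e^{-s/4 - r²/s} ds`. -/
def Ifun (d : ℕ) (α r : ℝ) : ℝ :=
  ∫ s in Set.Ioi (0 : ℝ), s ^ (((d : ℝ) + α) / 2 - 1) * Real.exp (-s / 4 - r ^ 2 / s)

/-- `ψ(r) = I(r)/I(0)`. -/
def psi (d : ℕ) (α r : ℝ) : ℝ := Ifun d α r / Ifun d α 0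

/-- The constant `C(d,-α) = α Γ((d+α)/2) / (2^{1-α} π^{d/2} Γ(1-α/2))`. -/
def Cconst (d : ℕ) (α : ℝ) : ℝ :=
  α * Real.Gamma (((d : ℝ) + α) / 2) /
    (2 ^ (1 - α) * Real.pi ^ ((d : ℝ) / 2) * Real.Gamma (1 - α / 2))

/-- Jump kernel density `n(x,y) = 2C(d,-α) ψ(m^{1/α}|x-y|) |x-y|^{-(d+α)}` for `x ≠ y`,
with `n(x,x) = 0`. -/
def nker (d : ℕ) (α m : ℝ) (x y : V d) : ℝ :=
  if x = y then 0
  else 2 * Cconst d α * psi d α (m ^ (1 / α) * ‖x - y‖) / ‖x - y‖ ^ ((d : ℝ) + α)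

/-- `F⁺ = F ∨ 0`. -/
def Fp (d : ℕ) (F : V d → V d → ℝ) (x y : V d) : ℝ := max (F x y) 0

/-- `F⁻ = -(F ∧ 0)`. -/
def Fm (d : ℕ) (F : V d → V d → ℝ) (x y : V d) : ℝ := -(min (F x y) 0)

/-- `G⁺ = (e^{F⁺} - 1) e^{-F⁻}`. -/
def Gp (d : ℕ) (F : V d → V d → ℝ) (x y : V d) : ℝ :=
  (Real.exp (Fp d F x y) - 1) * Real.exp (-(Fm d F x y))

/-- `G⁻ = 1 - e^{-F⁻}`. -/
def Gm (d : ℕ) (F : V d → V d → ℝ) (x y : V d) : ℝ := 1 - Real.exp (-(Fm d F x y))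

/-- The Dirichlet form `𝓔(u,u) = (1/2)∬ (u(x)-u(y))² n(x,y) dx dy` (in `[0,∞]`). -/
def En (d : ℕ) (α m : ℝ) (u : V d → ℝ) : ℝ≥0∞ :=
  (1 / 2) * ∫⁻ x, ∫⁻ y, ENNReal.ofReal ((u x - u y) ^ 2 * nker d α m x y)

/-- The jump-type energy `∬ (u(x)-u(y))² G(x,y) n(x,y) dx dy` (in `[0,∞]`). -/
def Jform (d : ℕ) (α m : ℝ) (G : V d → V d → ℝ) (u : V d → ℝ) : ℝ≥0∞ :=
  ∫⁻ x, ∫⁻ y, ENNReal.ofReal ((u x - u y) ^ 2 * G x y * nker d α m x y)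

/-- `NG(x) = ∫ G(x,y) n(x,y) dy` (in `[0,∞]`). -/
def NG (d : ℕ) (α m : ℝ) (G : V d → V d → ℝ) (x : V d) : ℝ≥0∞ :=
  ∫⁻ y, ENNReal.ofReal (G x y * nker d α m x y)

/-- `ρ = μ + ξ_G` where `ξ_G(dx) = NG(x) dx`. -/
def rho (d : ℕ) (α m : ℝ) (G : V d → V d → ℝ) (μ : Measure (V d)) : Measure (V d) :=
  μ + volume.withDensity (NG d α m G)

/-- `∫ u² dμ` (in `[0,∞]`). -/
def sqInt (d : ℕ) (u : V d → ℝ) (μ : Measure (V d)) : ℝ≥0∞ :=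
  ∫⁻ x, ENNReal.ofReal ((u x) ^ 2) ∂μ

/-- The cross term `∬ u(x)u(y)(e^{F(x,y)}-1) n(x,y) dy dx` (Lebesgue–Bochner integral on the
product space). -/
def crossInt (d : ℕ) (α m : ℝ) (F : V d → V d → ℝ) (u : V d → ℝ) : ℝ :=
  ∫ p : V d × V d, u p.1 * u p.2 * (Real.exp (F p.1 p.2) - 1) * nker d α m p.1 p.2

/-- The quadratic form
`𝓔^{μ,F}(u,u) = 𝓔(u,u) - ∬ u(x)u(y)(e^{F(x,y)}-1)n(x,y) dy dx - ∫ u² dμ⁺ + ∫ u² dμ⁻`. -/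
def EmuF (d : ℕ) (α m : ℝ) (F : V d → V d → ℝ) (μp μm : Measure (V d)) (u : V d → ℝ) : ℝ :=
  (En d α m u).toReal - crossInt d α m F u - (sqInt d u μp).toReal + (sqInt d u μm).toReal

/-- The killed form
`𝓔⁻(u,u) = (1/2)∬ (u(x)-u(y))² e^{-F⁻(x,y)} n(x,y) dx dy + ∫ u² dρ⁻` (in `[0,∞]`). -/
def EnMinus (d : ℕ) (α m : ℝ) (F : V d → V d → ℝ) (μm : Measure (V d)) (u : V d → ℝ) : ℝ≥0∞ :=
  (1 / 2) * (∫⁻ x, ∫⁻ y, ENNReal.ofReal ((u x - u y) ^ 2 * Real.exp (-(Fm d F x y)) * nker d α m x y))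
    + sqInt d u (rho d α m (Gm d F) μm)

lemma Ifun_nonneg (d : ℕ) (α r : ℝ) : 0 ≤ Ifun d α r := by
  apply setIntegral_nonneg measurableSet_Ioi
  intro s hs
  exact mul_nonneg (Real.rpow_nonneg (le_of_lt hs) _) (Real.exp_nonneg _)

lemma Ifun_meas (d : ℕ) (α : ℝ) : Measurable (Ifun d α) := by
  have h : StronglyMeasurable (fun p : ℝ × ℝ =>
      p.2 ^ (((d : ℝ) + α) / 2 - 1) * Real.exp (-p.2 / 4 - p.1 ^ 2 / p.2)) := by
    apply Measurable.stronglyMeasurable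
    measurability
  exact (h.integral_prod_right').measurable

lemma psi_meas (d : ℕ) (α : ℝ) : Measurable (psi d α) :=
  (Ifun_meas d α).div_const _

lemma psi_nonneg (d : ℕ) (α r : ℝ) : 0 ≤ psi d α r :=
  div_nonneg (Ifun_nonneg d α r) (Ifun_nonneg d α 0)

lemma Cconst_nonneg (d : ℕ) (α : ℝ) (hα0 : 0 < α) (hα2 : α < 2) : 0 ≤ Cconst d α := by
  apply div_nonneg
  · exact mul_nonneg hα0.le (Real.Gamma_pos_of_pos (by positivity)).le
  · have h1 : (0:ℝ) < 2 ^ (1 - α) := Real.rpow_pos_of_pos (by norm_num) _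
    have h2 : (0:ℝ) < Real.pi ^ ((d : ℝ) / 2) := Real.rpow_pos_of_pos Real.pi_pos _
    have h3 : (0:ℝ) < Real.Gamma (1 - α / 2) := Real.Gamma_pos_of_pos (by linarith)
    positivity

lemma nker_nonneg (d : ℕ) (α m : ℝ) (hα0 : 0 < α) (hα2 : α < 2) (x y : V d) :
    0 ≤ nker d α m x y := by
  unfold nker
  split
  · exact le_refl _
  · apply div_nonneg _ (Real.rpow_nonneg (norm_nonneg _) _)
    have := Cconst_nonneg d α hα0 hα2
    have := psi_nonneg d α (m ^ (1 / α) * ‖x - y‖)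
    positivity

lemma nker_symm (d : ℕ) (α m : ℝ) (x y : V d) : nker d α m x y = nker d α m y x := by
  unfold nker
  rw [norm_sub_rev]
  by_cases h : x = y
  · simp [h]
  · rw [if_neg h, if_neg (fun h' => h h'.symm)]

lemma nker_meas (d : ℕ) (α m : ℝ) : Measurable (Function.uncurry (nker d α m)) := by
  unfold nker Function.uncurry
  apply Measurable.ite
  · exact isClosed_diagonal.measurableSet
  · exact measurable_const
  · apply Measurable.div
    · apply Measurable.mul measurable_const
      apply (psi_meas d α).comp
      exact (measurable_const.mul ((measurable_fst.sub measurable_snd).norm))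
    · have : Measurable (fun p : V d × V d => ‖p.1 - p.2‖) :=
        (measurable_fst.sub measurable_snd).norm
      measurability

section Glemmas
variable {d : ℕ} {F : V d → V d → ℝ}

lemma Gp_nonneg (x y : V d) : 0 ≤ Gp d F x y := by
  apply mul_nonneg _ (Real.exp_nonneg _)
  have : (1:ℝ) = Real.exp 0 := (Real.exp_zero).symm
  rw [this]
  simp only [sub_nonneg]
  exact Real.exp_le_exp.mpr (le_max_right _ _)

lemma Gm_nonneg (x y : V d) : 0 ≤ Gm d F x y := by
  unfold Gm Fm
  have : Real.exp (-(-(min (F x y) 0))) ≤ Real.exp 0 :=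
    Real.exp_le_exp.mpr (by simp [min_le_right])
  rw [Real.exp_zero] at this
  linarith

lemma expFm_add_Gm (x y : V d) : Real.exp (-(Fm d F x y)) + Gm d F x y = 1 := by
  unfold Gm; ring

lemma expFm_add_Gp (x y : V d) :
    Real.exp (-(Fm d F x y)) + Gp d F x y = Real.exp (F x y) := by
  unfold Gp Fp Fm
  rw [sub_one_mul, ← Real.exp_add]
  have : max (F x y) 0 + - -min (F x y) 0 = F x y := by
    rw [neg_neg]; exact max_add_min _ _ |>.trans (by simp)
  rw [this]; ring

lemma Gp_sub_Gm (x y : V d) : Gp d F x y - Gm d F x y = Real.exp (F x y) - 1 := by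
  have h1 := expFm_add_Gp (F := F) x y
  have h2 := expFm_add_Gm (F := F) x y
  linarith

lemma Gp_symm (hFsymm : ∀ x y, F x y = F y x) (x y : V d) : Gp d F x y = Gp d F y x := by
  unfold Gp Fp Fm; rw [hFsymm]

lemma Gm_symm (hFsymm : ∀ x y, F x y = F y x) (x y : V d) : Gm d F x y = Gm d F y x := by
  unfold Gm Fm; rw [hFsymm]

lemma Gp_meas (hFmeas : Measurable (Function.uncurry F)) :
    Measurable (fun p : V d × V d => Gp d F p.1 p.2) := by
  unfold Gp Fp Fm
  have h : Measurable (fun p : V d × V d => F p.1 p.2) := hFmeas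
  measurability

lemma Gm_meas (hFmeas : Measurable (Function.uncurry F)) :
    Measurable (fun p : V d × V d => Gm d F p.1 p.2) := by
  unfold Gm Fm
  have h : Measurable (fun p : V d × V d => F p.1 p.2) := hFmeas
  measurability

lemma expFm_meas (hFmeas : Measurable (Function.uncurry F)) :
    Measurable (fun p : V d × V d => Real.exp (-(Fm d F p.1 p.2))) := by
  unfold Fm
  have h : Measurable (fun p : V d × V d => F p.1 p.2) := hFmeas
  measurability

end Glemmas

section mainlemmas
variable {d : ℕ} {α m : ℝ}

lemma NG_meas {G : V d → V d → ℝ} (hG : Measurable (fun p : V d × V d => G p.1 p.2)) :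
    Measurable (NG d α m G) := by
  unfold NG
  exact Measurable.lintegral_prod_right
    ((hG.mul (nker_meas d α m)).ennreal_ofReal)

lemma sq_lintegral_NG_eq {u : V d → ℝ} (hu : Measurable u)
    {G : V d → V d → ℝ} (hG : Measurable (fun p : V d × V d => G p.1 p.2)) :
    ∫⁻ x, ENNReal.ofReal (u x ^ 2) * NG d α m G x
      = ∫⁻ p : V d × V d, ENNReal.ofReal (u p.1 ^ 2 * (G p.1 p.2 * nker d α m p.1 p.2))
          ∂((volume : Measure (V d)).prod volume) := by
  have hmeasP : Measurable (fun p : V d × V d =>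
      ENNReal.ofReal (u p.1 ^ 2 * (G p.1 p.2 * nker d α m p.1 p.2))) := by
    have h1 : Measurable (fun p : V d × V d => u p.1) := hu.comp measurable_fst
    have h2 : Measurable (fun p : V d × V d => nker d α m p.1 p.2) := nker_meas d α m
    measurability
  rw [lintegral_prod _ hmeasP.aemeasurable]
  apply lintegral_congr
  intro x
  have hmy : Measurable (fun y => ENNReal.ofReal (G x y * nker d α m x y)) :=
    ((hG.mul (nker_meas d α m)).ennreal_ofReal).comp measurable_prodMk_left
  calc ENNReal.ofReal (u x ^ 2) * NG d α m G x
      = ∫⁻ y, ENNReal.ofReal (u x ^ 2) * ENNReal.ofReal (G x y * nker d α m x y) := by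
        rw [lintegral_const_mul _ hmy]; rfl
    _ = ∫⁻ y, ENNReal.ofReal (u x ^ 2 * (G x y * nker d α m x y)) := by
        apply lintegral_congr; intro y; rw [ENNReal.ofReal_mul (sq_nonneg _)]

lemma swap_sq_eq {u : V d → ℝ} {k : V d → V d → ℝ}
    (hsymm : ∀ x y, k x y = k y x) :
    ∫⁻ p : V d × V d, ENNReal.ofReal (u p.2 ^ 2 * k p.1 p.2)
        ∂((volume : Measure (V d)).prod volume)
      = ∫⁻ p : V d × V d, ENNReal.ofReal (u p.1 ^ 2 * k p.1 p.2)
          ∂((volume : Measure (V d)).prod volume) := by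
  have := lintegral_prod_swap
    (fun p : V d × V d => ENNReal.ofReal (u p.1 ^ 2 * k p.1 p.2))
    (μ := (volume : Measure (V d))) (ν := (volume : Measure (V d)))
  rw [← this]
  apply lintegral_congr
  intro z
  simp only [Prod.fst_swap, Prod.snd_swap]
  rw [hsymm z.2 z.1]

lemma ofReal_two_mul (a : ℝ) : ENNReal.ofReal (2 * a) = 2 * ENNReal.ofReal a := by
  rw [ENNReal.ofReal_mul (by norm_num : (0:ℝ) ≤ 2)]
  norm_num

end mainlemmas


/-- The form `𝓔^Y(u,u) := 𝓔^{μ,F}(u,u) + ∫ u² dρ⁺` satisfies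
`𝓔^Y(u,u) = 𝓔⁻(u,u) + (1/2)∬ (u(x)-u(y))² G⁺(x,y) n(x,y) dx dy`; in particular
`𝓔^Y(u,u) ≥ 0`. -/
theorem EY_identity_nonneg
    (d : ℕ) (hd : 1 ≤ d) (α m : ℝ) (hα0 : 0 < α) (hα2 : α < 2) (hm : 0 ≤ m)
    (F : V d → V d → ℝ) (hFmeas : Measurable (Function.uncurry F))
    (hFbound : ∃ M : ℝ, ∀ x y, |F x y| ≤ M)
    (hFsymm : ∀ x y, F x y = F y x) (hFdiag : ∀ x, F x x = 0)
    (μp μm : Measure (V d))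
    (u : V d → ℝ) (hu : Measurable u)
    (hE : En d α m u ≠ ⊤)
    (hμp : sqInt d u μp ≠ ⊤) (hμm : sqInt d u μm ≠ ⊤)
    (hNGp : ∫⁻ x, ENNReal.ofReal ((u x) ^ 2) * NG d α m (Gp d F) x ≠ ⊤)
    (hNGm : ∫⁻ x, ENNReal.ofReal ((u x) ^ 2) * NG d α m (Gm d F) x ≠ ⊤) :
    EmuF d α m F μp μm u + (sqInt d u (rho d α m (Gp d F) μp)).toReal
      = (EnMinus d α m F μm u).toReal + (1 / 2) * (Jform d α m (Gp d F) u).toReal ∧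
    0 ≤ EmuF d α m F μp μm u + (sqInt d u (rho d α m (Gp d F) μp)).toReal := by
  have hnmeas : Measurable (fun p : V d × V d => nker d α m p.1 p.2) := nker_meas d α m
  have hnn : ∀ x y : V d, 0 ≤ nker d α m x y := fun x y => nker_nonneg d α m hα0 hα2 x y
  have hGpm : Measurable (fun p : V d × V d => Gp d F p.1 p.2) := Gp_meas hFmeas
  have hGmm : Measurable (fun p : V d × V d => Gm d F p.1 p.2) := Gm_meas hFmeas
  have hExm : Measurable (fun p : V d × V d => Real.exp (-(Fm d F p.1 p.2))) := expFm_meas hFmeas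
  have hu1 : Measurable (fun p : V d × V d => u p.1) := hu.comp measurable_fst
  have hu2 : Measurable (fun p : V d × V d => u p.2) := hu.comp measurable_snd
  have hΔ : Measurable (fun p : V d × V d => (u p.1 - u p.2) ^ 2) := (hu1.sub hu2).pow_const 2
  set pvol : Measure (V d × V d) := (volume : Measure (V d)).prod volume with hpvol
  -- the six ENNReal quantities
  set e2 := ∫⁻ p : V d × V d, ENNReal.ofReal ((u p.1 - u p.2) ^ 2 * nker d α m p.1 p.2) ∂pvol
    with he2def
  set aE := ∫⁻ p : V d × V d, ENNReal.ofReal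
      ((u p.1 - u p.2) ^ 2 * Real.exp (-(Fm d F p.1 p.2)) * nker d α m p.1 p.2) ∂pvol with haEdef
  set jp := ∫⁻ p : V d × V d, ENNReal.ofReal
      ((u p.1 - u p.2) ^ 2 * Gp d F p.1 p.2 * nker d α m p.1 p.2) ∂pvol with hjpdef
  set jm := ∫⁻ p : V d × V d, ENNReal.ofReal
      ((u p.1 - u p.2) ^ 2 * Gm d F p.1 p.2 * nker d α m p.1 p.2) ∂pvol with hjmdef
  set sp := ∫⁻ p : V d × V d, ENNReal.ofReal
      (u p.1 ^ 2 * (Gp d F p.1 p.2 * nker d α m p.1 p.2)) ∂pvol with hspdef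
  set sm := ∫⁻ p : V d × V d, ENNReal.ofReal
      (u p.1 ^ 2 * (Gm d F p.1 p.2 * nker d α m p.1 p.2)) ∂pvol with hsmdef
  -- measurability of integrands
  have hqmeas : Measurable (fun p : V d × V d =>
      ENNReal.ofReal ((u p.1 - u p.2) ^ 2 * nker d α m p.1 p.2)) :=
    (hΔ.mul hnmeas).ennreal_ofReal
  have haEmeas : Measurable (fun p : V d × V d => ENNReal.ofReal
      ((u p.1 - u p.2) ^ 2 * Real.exp (-(Fm d F p.1 p.2)) * nker d α m p.1 p.2)) :=
    ((hΔ.mul hExm).mul hnmeas).ennreal_ofReal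
  have hjpmeas : Measurable (fun p : V d × V d => ENNReal.ofReal
      ((u p.1 - u p.2) ^ 2 * Gp d F p.1 p.2 * nker d α m p.1 p.2)) :=
    ((hΔ.mul hGpm).mul hnmeas).ennreal_ofReal
  have hjmmeas : Measurable (fun p : V d × V d => ENNReal.ofReal
      ((u p.1 - u p.2) ^ 2 * Gm d F p.1 p.2 * nker d α m p.1 p.2)) :=
    ((hΔ.mul hGmm).mul hnmeas).ennreal_ofReal
  have hspmeas : Measurable (fun p : V d × V d => ENNReal.ofReal
      (u p.1 ^ 2 * (Gp d F p.1 p.2 * nker d α m p.1 p.2))) :=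
    ((hu1.pow_const 2).mul (hGpm.mul hnmeas)).ennreal_ofReal
  have hsp2meas : Measurable (fun p : V d × V d => ENNReal.ofReal
      (u p.2 ^ 2 * (Gp d F p.1 p.2 * nker d α m p.1 p.2))) :=
    ((hu2.pow_const 2).mul (hGpm.mul hnmeas)).ennreal_ofReal
  have hsmmeas : Measurable (fun p : V d × V d => ENNReal.ofReal
      (u p.1 ^ 2 * (Gm d F p.1 p.2 * nker d α m p.1 p.2))) :=
    ((hu1.pow_const 2).mul (hGmm.mul hnmeas)).ennreal_ofReal
  have hsm2meas : Measurable (fun p : V d × V d => ENNReal.ofReal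
      (u p.2 ^ 2 * (Gm d F p.1 p.2 * nker d α m p.1 p.2))) :=
    ((hu2.pow_const 2).mul (hGmm.mul hnmeas)).ennreal_ofReal
  -- iterated = product
  have hEn2 : En d α m u = (1 / 2) * e2 := by
    unfold En
    congr 1
    exact lintegral_lintegral hqmeas.aemeasurable
  have hJp2 : Jform d α m (Gp d F) u = jp := by
    unfold Jform
    exact lintegral_lintegral hjpmeas.aemeasurable
  have haE2 : (∫⁻ x, ∫⁻ y, ENNReal.ofReal
      ((u x - u y) ^ 2 * Real.exp (-(Fm d F x y)) * nker d α m x y)) = aE :=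
    lintegral_lintegral haEmeas.aemeasurable
  -- sp, sm identification
  have hspNG : (∫⁻ x, ENNReal.ofReal (u x ^ 2) * NG d α m (Gp d F) x) = sp :=
    sq_lintegral_NG_eq hu hGpm
  have hsmNG : (∫⁻ x, ENNReal.ofReal (u x ^ 2) * NG d α m (Gm d F) x) = sm :=
    sq_lintegral_NG_eq hu hGmm
  have hsp_ne : sp ≠ ⊤ := hspNG ▸ hNGp
  have hsm_ne : sm ≠ ⊤ := hsmNG ▸ hNGm
  -- e2 = aE + jm
  have he2split : e2 = aE + jm := by
    rw [haEdef, hjmdef, ← lintegral_add_left haEmeas]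
    apply lintegral_congr
    intro p
    rw [← ENNReal.ofReal_add]
    · congr 1
      have h1 := expFm_add_Gm (F := F) p.1 p.2
      linear_combination (-((u p.1 - u p.2) ^ 2 * nker d α m p.1 p.2)) * h1
    · have := Real.exp_nonneg (-(Fm d F p.1 p.2))
      have := hnn p.1 p.2
      positivity
    · have := Gm_nonneg (F := F) p.1 p.2
      have := hnn p.1 p.2
      positivity
  have he2_ne : e2 ≠ ⊤ := by
    intro h
    apply hE
    rw [hEn2, h, ENNReal.mul_top (by norm_num)]
  have haE_ne : aE ≠ ⊤ := (ENNReal.add_ne_top.mp (he2split ▸ he2_ne)).1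
  have hjm_ne : jm ≠ ⊤ := (ENNReal.add_ne_top.mp (he2split ▸ he2_ne)).2
  -- swap identities
  have hswap_p : ∫⁻ p : V d × V d, ENNReal.ofReal
      (u p.2 ^ 2 * (Gp d F p.1 p.2 * nker d α m p.1 p.2)) ∂pvol = sp := by
    rw [hspdef, hpvol]
    exact swap_sq_eq (k := fun x y => Gp d F x y * nker d α m x y)
      (fun x y => by
        show Gp d F x y * nker d α m x y = Gp d F y x * nker d α m y x
        rw [Gp_symm hFsymm x y, nker_symm d α m x y])
  have hswap_m : ∫⁻ p : V d × V d, ENNReal.ofReal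
      (u p.2 ^ 2 * (Gm d F p.1 p.2 * nker d α m p.1 p.2)) ∂pvol = sm := by
    rw [hsmdef, hpvol]
    exact swap_sq_eq (k := fun x y => Gm d F x y * nker d α m x y)
      (fun x y => by
        show Gm d F x y * nker d α m x y = Gm d F y x * nker d α m y x
        rw [Gm_symm hFsymm x y, nker_symm d α m x y])
  -- jp is finite
  have hjp_le : jp ≤ 2 * sp + 2 * sp := by
    rw [hjpdef]
    calc ∫⁻ p : V d × V d, ENNReal.ofReal
          ((u p.1 - u p.2) ^ 2 * Gp d F p.1 p.2 * nker d α m p.1 p.2) ∂pvol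
        ≤ ∫⁻ p : V d × V d, (2 * ENNReal.ofReal
            (u p.1 ^ 2 * (Gp d F p.1 p.2 * nker d α m p.1 p.2)) +
          2 * ENNReal.ofReal
            (u p.2 ^ 2 * (Gp d F p.1 p.2 * nker d α m p.1 p.2))) ∂pvol := by
          apply lintegral_mono
          intro p
          have hGn : 0 ≤ Gp d F p.1 p.2 * nker d α m p.1 p.2 :=
            mul_nonneg (Gp_nonneg _ _) (hnn _ _)
          have key : (u p.1 - u p.2) ^ 2 * Gp d F p.1 p.2 * nker d α m p.1 p.2
              ≤ 2 * (u p.1 ^ 2 * (Gp d F p.1 p.2 * nker d α m p.1 p.2)) +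
                2 * (u p.2 ^ 2 * (Gp d F p.1 p.2 * nker d α m p.1 p.2)) := by
            nlinarith [mul_nonneg (sq_nonneg (u p.1 + u p.2)) hGn]
          calc ENNReal.ofReal ((u p.1 - u p.2) ^ 2 * Gp d F p.1 p.2 * nker d α m p.1 p.2)
              ≤ ENNReal.ofReal (2 * (u p.1 ^ 2 * (Gp d F p.1 p.2 * nker d α m p.1 p.2)) +
                  2 * (u p.2 ^ 2 * (Gp d F p.1 p.2 * nker d α m p.1 p.2))) :=
                ENNReal.ofReal_le_ofReal key
            _ = ENNReal.ofReal (2 * (u p.1 ^ 2 * (Gp d F p.1 p.2 * nker d α m p.1 p.2))) +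
                  ENNReal.ofReal (2 * (u p.2 ^ 2 * (Gp d F p.1 p.2 * nker d α m p.1 p.2))) := by
                rw [ENNReal.ofReal_add
                  (mul_nonneg (by norm_num) (mul_nonneg (sq_nonneg _) hGn))
                  (mul_nonneg (by norm_num) (mul_nonneg (sq_nonneg _) hGn))]
            _ = 2 * ENNReal.ofReal (u p.1 ^ 2 * (Gp d F p.1 p.2 * nker d α m p.1 p.2)) +
                  2 * ENNReal.ofReal (u p.2 ^ 2 * (Gp d F p.1 p.2 * nker d α m p.1 p.2)) := by
                rw [ofReal_two_mul, ofReal_two_mul]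
      _ = 2 * sp + 2 * sp := by
          rw [lintegral_add_left (hspmeas.const_mul 2),
            lintegral_const_mul 2 hspmeas, lintegral_const_mul 2 hsp2meas, hswap_p, hspdef]
  have hjp_ne : jp ≠ ⊤ :=
    ne_top_of_le_ne_top (by
      exact ENNReal.add_ne_top.mpr ⟨ENNReal.mul_ne_top (by norm_num) hsp_ne,
        ENNReal.mul_ne_top (by norm_num) hsp_ne⟩) hjp_le
  -- rho expansions
  have hrho_p : sqInt d u (rho d α m (Gp d F) μp) = sqInt d u μp + sp := by
    unfold rho sqInt
    rw [lintegral_add_measure]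
    congr 1
    rw [lintegral_withDensity_eq_lintegral_mul volume (NG_meas hGpm)
      ((hu.pow_const 2).ennreal_ofReal), ← hspNG]
    exact lintegral_congr fun x => by rw [Pi.mul_apply]; exact mul_comm _ _
  have hrho_m : sqInt d u (rho d α m (Gm d F) μm) = sqInt d u μm + sm := by
    unfold rho sqInt
    rw [lintegral_add_measure]
    congr 1
    rw [lintegral_withDensity_eq_lintegral_mul volume (NG_meas hGmm)
      ((hu.pow_const 2).ennreal_ofReal), ← hsmNG]
    exact lintegral_congr fun x => by rw [Pi.mul_apply]; exact mul_comm _ _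
  -- pointwise nonnegativity
  have hPnn : ∀ p : V d × V d, (0:ℝ) ≤
      u p.1 ^ 2 * (Gp d F p.1 p.2 * nker d α m p.1 p.2)
        + u p.2 ^ 2 * (Gp d F p.1 p.2 * nker d α m p.1 p.2)
        + (u p.1 - u p.2) ^ 2 * Gm d F p.1 p.2 * nker d α m p.1 p.2 := by
    intro p
    have ha := mul_nonneg (sq_nonneg (u p.1))
      (mul_nonneg (Gp_nonneg (F := F) p.1 p.2) (hnn p.1 p.2))
    have hb := mul_nonneg (sq_nonneg (u p.2))
      (mul_nonneg (Gp_nonneg (F := F) p.1 p.2) (hnn p.1 p.2))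
    have hc := mul_nonneg (mul_nonneg (sq_nonneg (u p.1 - u p.2))
      (Gm_nonneg (F := F) p.1 p.2)) (hnn p.1 p.2)
    linarith
  have hNnn : ∀ p : V d × V d, (0:ℝ) ≤
      u p.1 ^ 2 * (Gm d F p.1 p.2 * nker d α m p.1 p.2)
        + u p.2 ^ 2 * (Gm d F p.1 p.2 * nker d α m p.1 p.2)
        + (u p.1 - u p.2) ^ 2 * Gp d F p.1 p.2 * nker d α m p.1 p.2 := by
    intro p
    have ha := mul_nonneg (sq_nonneg (u p.1))
      (mul_nonneg (Gm_nonneg (F := F) p.1 p.2) (hnn p.1 p.2))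
    have hb := mul_nonneg (sq_nonneg (u p.2))
      (mul_nonneg (Gm_nonneg (F := F) p.1 p.2) (hnn p.1 p.2))
    have hc := mul_nonneg (mul_nonneg (sq_nonneg (u p.1 - u p.2))
      (Gp_nonneg (F := F) p.1 p.2)) (hnn p.1 p.2)
    linarith
  -- splitting the positive/negative parts
  have hsplitP : ∫⁻ p : V d × V d, ENNReal.ofReal
      (u p.1 ^ 2 * (Gp d F p.1 p.2 * nker d α m p.1 p.2)
        + u p.2 ^ 2 * (Gp d F p.1 p.2 * nker d α m p.1 p.2)
        + (u p.1 - u p.2) ^ 2 * Gm d F p.1 p.2 * nker d α m p.1 p.2) ∂pvol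
      = sp + sp + jm := by
    have heq : ∀ p : V d × V d, ENNReal.ofReal
        (u p.1 ^ 2 * (Gp d F p.1 p.2 * nker d α m p.1 p.2)
          + u p.2 ^ 2 * (Gp d F p.1 p.2 * nker d α m p.1 p.2)
          + (u p.1 - u p.2) ^ 2 * Gm d F p.1 p.2 * nker d α m p.1 p.2)
        = ENNReal.ofReal (u p.1 ^ 2 * (Gp d F p.1 p.2 * nker d α m p.1 p.2))
          + ENNReal.ofReal (u p.2 ^ 2 * (Gp d F p.1 p.2 * nker d α m p.1 p.2))
          + ENNReal.ofReal ((u p.1 - u p.2) ^ 2 * Gm d F p.1 p.2 * nker d α m p.1 p.2) := by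
      intro p
      have ha := mul_nonneg (sq_nonneg (u p.1))
        (mul_nonneg (Gp_nonneg (F := F) p.1 p.2) (hnn p.1 p.2))
      have hb := mul_nonneg (sq_nonneg (u p.2))
        (mul_nonneg (Gp_nonneg (F := F) p.1 p.2) (hnn p.1 p.2))
      have hc := mul_nonneg (mul_nonneg (sq_nonneg (u p.1 - u p.2))
        (Gm_nonneg (F := F) p.1 p.2)) (hnn p.1 p.2)
      rw [ENNReal.ofReal_add (add_nonneg ha hb) hc, ENNReal.ofReal_add ha hb]
    rw [lintegral_congr heq, lintegral_add_right _ hjmmeas, lintegral_add_right _ hsp2meas,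
      hswap_p, ← hspdef, ← hjmdef]
  have hsplitN : ∫⁻ p : V d × V d, ENNReal.ofReal
      (u p.1 ^ 2 * (Gm d F p.1 p.2 * nker d α m p.1 p.2)
        + u p.2 ^ 2 * (Gm d F p.1 p.2 * nker d α m p.1 p.2)
        + (u p.1 - u p.2) ^ 2 * Gp d F p.1 p.2 * nker d α m p.1 p.2) ∂pvol
      = sm + sm + jp := by
    have heq : ∀ p : V d × V d, ENNReal.ofReal
        (u p.1 ^ 2 * (Gm d F p.1 p.2 * nker d α m p.1 p.2)
          + u p.2 ^ 2 * (Gm d F p.1 p.2 * nker d α m p.1 p.2)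
          + (u p.1 - u p.2) ^ 2 * Gp d F p.1 p.2 * nker d α m p.1 p.2)
        = ENNReal.ofReal (u p.1 ^ 2 * (Gm d F p.1 p.2 * nker d α m p.1 p.2))
          + ENNReal.ofReal (u p.2 ^ 2 * (Gm d F p.1 p.2 * nker d α m p.1 p.2))
          + ENNReal.ofReal ((u p.1 - u p.2) ^ 2 * Gp d F p.1 p.2 * nker d α m p.1 p.2) := by
      intro p
      have ha := mul_nonneg (sq_nonneg (u p.1))
        (mul_nonneg (Gm_nonneg (F := F) p.1 p.2) (hnn p.1 p.2))
      have hb := mul_nonneg (sq_nonneg (u p.2))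
        (mul_nonneg (Gm_nonneg (F := F) p.1 p.2) (hnn p.1 p.2))
      have hc := mul_nonneg (mul_nonneg (sq_nonneg (u p.1 - u p.2))
        (Gp_nonneg (F := F) p.1 p.2)) (hnn p.1 p.2)
      rw [ENNReal.ofReal_add (add_nonneg ha hb) hc, ENNReal.ofReal_add ha hb]
    rw [lintegral_congr heq, lintegral_add_right _ hjpmeas, lintegral_add_right _ hsm2meas,
      hswap_m, ← hsmdef, ← hjpdef]
  -- integrability
  have hPmeas : Measurable (fun p : V d × V d =>
      u p.1 ^ 2 * (Gp d F p.1 p.2 * nker d α m p.1 p.2)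
        + u p.2 ^ 2 * (Gp d F p.1 p.2 * nker d α m p.1 p.2)
        + (u p.1 - u p.2) ^ 2 * Gm d F p.1 p.2 * nker d α m p.1 p.2) :=
    (((hu1.pow_const 2).mul (hGpm.mul hnmeas)).add
      ((hu2.pow_const 2).mul (hGpm.mul hnmeas))).add ((hΔ.mul hGmm).mul hnmeas)
  have hNmeas : Measurable (fun p : V d × V d =>
      u p.1 ^ 2 * (Gm d F p.1 p.2 * nker d α m p.1 p.2)
        + u p.2 ^ 2 * (Gm d F p.1 p.2 * nker d α m p.1 p.2)
        + (u p.1 - u p.2) ^ 2 * Gp d F p.1 p.2 * nker d α m p.1 p.2) :=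
    (((hu1.pow_const 2).mul (hGmm.mul hnmeas)).add
      ((hu2.pow_const 2).mul (hGmm.mul hnmeas))).add ((hΔ.mul hGpm).mul hnmeas)
  have hPfin : sp + sp + jm ≠ ⊤ :=
    ENNReal.add_ne_top.mpr ⟨ENNReal.add_ne_top.mpr ⟨hsp_ne, hsp_ne⟩, hjm_ne⟩
  have hNfin : sm + sm + jp ≠ ⊤ :=
    ENNReal.add_ne_top.mpr ⟨ENNReal.add_ne_top.mpr ⟨hsm_ne, hsm_ne⟩, hjp_ne⟩
  have hintP : Integrable (fun p : V d × V d =>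
      u p.1 ^ 2 * (Gp d F p.1 p.2 * nker d α m p.1 p.2)
        + u p.2 ^ 2 * (Gp d F p.1 p.2 * nker d α m p.1 p.2)
        + (u p.1 - u p.2) ^ 2 * Gm d F p.1 p.2 * nker d α m p.1 p.2) pvol := by
    refine ⟨hPmeas.aestronglyMeasurable, ?_⟩
    rw [hasFiniteIntegral_iff_ofReal (ae_of_all _ hPnn), hsplitP]
    exact lt_top_iff_ne_top.mpr hPfin
  have hintN : Integrable (fun p : V d × V d =>
      u p.1 ^ 2 * (Gm d F p.1 p.2 * nker d α m p.1 p.2)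
        + u p.2 ^ 2 * (Gm d F p.1 p.2 * nker d α m p.1 p.2)
        + (u p.1 - u p.2) ^ 2 * Gp d F p.1 p.2 * nker d α m p.1 p.2) pvol := by
    refine ⟨hNmeas.aestronglyMeasurable, ?_⟩
    rw [hasFiniteIntegral_iff_ofReal (ae_of_all _ hNnn), hsplitN]
    exact lt_top_iff_ne_top.mpr hNfin
  -- pointwise identity for the cross integrand
  have hptwise : ∀ p : V d × V d,
      u p.1 * u p.2 * (Real.exp (F p.1 p.2) - 1) * nker d α m p.1 p.2
        = 2⁻¹ * ((u p.1 ^ 2 * (Gp d F p.1 p.2 * nker d α m p.1 p.2)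
            + u p.2 ^ 2 * (Gp d F p.1 p.2 * nker d α m p.1 p.2)
            + (u p.1 - u p.2) ^ 2 * Gm d F p.1 p.2 * nker d α m p.1 p.2)
          - (u p.1 ^ 2 * (Gm d F p.1 p.2 * nker d α m p.1 p.2)
            + u p.2 ^ 2 * (Gm d F p.1 p.2 * nker d α m p.1 p.2)
            + (u p.1 - u p.2) ^ 2 * Gp d F p.1 p.2 * nker d α m p.1 p.2)) := by
    intro p
    have h1 := Gp_sub_Gm (F := F) p.1 p.2
    linear_combination (-(u p.1 * u p.2 * nker d α m p.1 p.2)) * h1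
  -- evaluation of the cross term
  have hcross : crossInt d α m F u
      = 2⁻¹ * ((sp + sp + jm).toReal - (sm + sm + jp).toReal) := by
    unfold crossInt
    rw [Measure.volume_eq_prod]
    rw [integral_congr_ae (ae_of_all _ hptwise), integral_const_mul, integral_sub hintP hintN,
      integral_eq_lintegral_of_nonneg_ae (ae_of_all _ hPnn) hintP.1,
      integral_eq_lintegral_of_nonneg_ae (ae_of_all _ hNnn) hintN.1,
      hsplitP, hsplitN]
  -- final assembly
  have hhalf : ((1:ℝ≥0∞)/2).toReal = 1/2 := by simp
  have hre2 : e2.toReal = aE.toReal + jm.toReal := by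
    rw [he2split, ENNReal.toReal_add haE_ne hjm_ne]
  have key : EmuF d α m F μp μm u + (sqInt d u (rho d α m (Gp d F) μp)).toReal
      = (EnMinus d α m F μm u).toReal + (1/2) * (Jform d α m (Gp d F) u).toReal := by
    unfold EmuF EnMinus
    rw [hEn2, hJp2, haE2, hrho_p, hrho_m, hcross]
    rw [ENNReal.toReal_add hμp hsp_ne,
      ENNReal.toReal_add (ENNReal.mul_ne_top (by norm_num) haE_ne)
        (ENNReal.add_ne_top.mpr ⟨hμm, hsm_ne⟩),
      ENNReal.toReal_add hμm hsm_ne,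
      ENNReal.toReal_mul, ENNReal.toReal_mul, hhalf,
      ENNReal.toReal_add (ENNReal.add_ne_top.mpr ⟨hsp_ne, hsp_ne⟩) hjm_ne,
      ENNReal.toReal_add hsp_ne hsp_ne,
      ENNReal.toReal_add (ENNReal.add_ne_top.mpr ⟨hsm_ne, hsm_ne⟩) hjp_ne,
      ENNReal.toReal_add hsm_ne hsm_ne]
    linarith
  refine ⟨key, ?_⟩
  rw [key]
  have h1 : (0:ℝ) ≤ (EnMinus d α m F μm u).toReal := ENNReal.toReal_nonneg
  have h2 : (0:ℝ) ≤ (Jform d α m (Gp d F) u).toReal := ENNReal.toReal_nonneg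
  linarith
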